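/- Let f : ℝ^m → ℝ be C¹, α ∈ (0,1), δ₀ > 0, and let h : ℝ^m → (0, δ₀] be a continuous function satisfying f(x − h(x)∇f(x)) − f(x) ≤ −α h(x)‖∇f(x)‖² for every x ∈ ℝ^m. Define the sequence x_{n+1} = x_n − h(x_n)∇f(x_n) from any initial point x₀. Then every cluster point of (x_n) is a critical point of f, and either lim_{n→∞} f(x_n) = −∞ or lim_{n→∞} ‖x_{n+1} − x_n‖ = 0. -/

import Mathlib

/-!
By the Armijo condition, `f` drops by at least `g(x n) = α h(x n) ‖∇f(x n)‖²` at each step, so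
`f ∘ x` decreases. Either it diverges to `-∞`, and then continuity of `f` rules out cluster
points, or it converges, and then `g(x n) → 0`. Since `g` is continuous and vanishes exactly at
the critical points, cluster points are critical; and `‖x (n + 1) - x n‖² ≤ (δ₀ / α) g(x n)`.
-/

open Filter Topology Gradient

theorem tendsto_atBot_or_tendsto_zero_of_le_sub {u g : ℕ → ℝ} (hg : ∀ n, 0 ≤ g n)
    (hu : ∀ n, u (n + 1) ≤ u n - g n) :
    Tendsto u atTop atBot ∨ Tendsto g atTop (𝓝 0) := by
  have hanti : Antitone u :=
    antitone_nat_of_succ_le fun n => (hu n).trans (sub_le_self _ (hg n))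
  refine (tendsto_atTop_of_antitone hanti).imp id fun ⟨l, hl⟩ => ?_
  have hdecr : Tendsto (fun n => u n - u (n + 1)) atTop (𝓝 0) := by
    simpa using hl.sub (hl.comp (tendsto_add_atTop_nat 1))
  exact tendsto_of_tendsto_of_tendsto_of_le_of_le tendsto_const_nhds hdecr hg
    fun n => by linarith [hu n]

theorem MapClusterPt.not_tendsto_atBot_comp {X α : Type*} [TopologicalSpace X] {l : Filter α}
    {x : α → X} {p : X} {f : X → ℝ} (hf : ContinuousAt f p) (hp : MapClusterPt p l x) :
    ¬Tendsto (f ∘ x) l atBot := fun hbot =>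
  ((hp.continuousAt_comp hf).clusterPt.mono hbot).ne (nhds_inf_atBot _)

theorem MapClusterPt.eq_of_tendsto_comp {X α : Type*} [TopologicalSpace X] {l : Filter α}
    {x : α → X} {p : X} {g : X → ℝ} {c : ℝ} (hg : ContinuousAt g p) (hp : MapClusterPt p l x)
    (hgx : Tendsto (g ∘ x) l (𝓝 c)) : g p = c :=
  eq_of_nhds_neBot ((hp.continuousAt_comp hg).clusterPt.mono hgx)

theorem clusterPt_and_tendsto_of_sufficient_descent {X : Type*} [TopologicalSpace X]
    {f g : X → ℝ} (hf : Continuous f) (hg : Continuous g) (hg_nonneg : ∀ y, 0 ≤ g y)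
    {x : ℕ → X} (hdescent : ∀ n, f (x (n + 1)) ≤ f (x n) - g (x n)) :
    (∀ p, MapClusterPt p atTop x → g p = 0) ∧
      (Tendsto (f ∘ x) atTop atBot ∨ Tendsto (g ∘ x) atTop (𝓝 0)) := by
  rcases tendsto_atBot_or_tendsto_zero_of_le_sub (u := f ∘ x) (fun n => hg_nonneg (x n))
    hdescent with hbot | hzero
  · exact ⟨fun p hp => absurd hbot (hp.not_tendsto_atBot_comp hf.continuousAt), .inl hbot⟩
  · exact ⟨fun p hp => hp.eq_of_tendsto_comp hg.continuousAt hzero, .inr hzero⟩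

theorem continuous_gradient {m : ℕ} {f : EuclideanSpace ℝ (Fin m) → ℝ} (hf : ContDiff ℝ 1 f) :
    Continuous (∇ f) :=
  (InnerProductSpace.toDual ℝ _).symm.continuous.comp (hf.continuous_fderiv one_ne_zero)

theorem continuous_backtracking_GD_properties_general
    {m : ℕ} (f : EuclideanSpace ℝ (Fin m) → ℝ) (hf : ContDiff ℝ 1 f)
    (α δ₀ : ℝ) (hα0 : 0 < α)
    (h : EuclideanSpace ℝ (Fin m) → ℝ) (hcont : Continuous h)
    (hpos : ∀ x, 0 < h x) (hle : ∀ x, h x ≤ δ₀)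
    (harmijo : ∀ x, f (x - h x • ∇ f x) - f x ≤ -(α * h x * ‖∇ f x‖ ^ 2))
    (x : ℕ → EuclideanSpace ℝ (Fin m))
    (hupd : ∀ n, x (n + 1) = x n - h (x n) • ∇ f (x n)) :
    (∀ p, MapClusterPt p Filter.atTop x → ∇ f p = 0) ∧
      (Filter.Tendsto (fun n => f (x n)) Filter.atTop Filter.atBot ∨
        Filter.Tendsto (fun n => ‖x (n + 1) - x n‖) Filter.atTop (nhds 0)) := by
  set g := fun y => α * (h y * ‖∇ f y‖ ^ 2)
  have hg : Continuous g := continuous_const.mul (hcont.mul ((continuous_gradient hf).norm.pow 2))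
  have hdescent : ∀ n, f (x (n + 1)) ≤ f (x n) - g (x n) := fun n => by
    have := harmijo (x n)
    rw [← hupd n] at this
    linarith [mul_assoc α (h (x n)) (‖∇ f (x n)‖ ^ 2)]
  have hstep : ∀ n, ‖x (n + 1) - x n‖ ≤ √(δ₀ / α * g (x n)) := fun n => by
    refine Real.le_sqrt_of_sq_le ?_
    rw [hupd n, sub_sub_cancel_left, norm_neg, norm_smul, Real.norm_of_nonneg (hpos (x n)).le,
      div_mul_eq_mul_div, le_div_iff₀ hα0]
    calc (h (x n) * ‖∇ f (x n)‖) ^ 2 * α = α * (h (x n) * h (x n)) * ‖∇ f (x n)‖ ^ 2 := by ring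
      _ ≤ α * (δ₀ * h (x n)) * ‖∇ f (x n)‖ ^ 2 := by gcongr; exacts [(hpos (x n)).le, hle (x n)]
      _ = δ₀ * g (x n) := by ring
  have hg_nonneg : ∀ y, 0 ≤ g y := fun y =>
    mul_nonneg hα0.le (mul_nonneg (hpos y).le (sq_nonneg _))
  obtain ⟨hcluster, hlim⟩ :=
    clusterPt_and_tendsto_of_sufficient_descent hf.continuous hg hg_nonneg hdescent
  refine ⟨fun p hp => by simpa [g, hα0.ne', (hpos p).ne'] using hcluster p hp,
    hlim.imp id fun hzero => squeeze_zero (fun n => norm_nonneg _) hstep ?_⟩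
  simpa using (hzero.const_mul (δ₀ / α)).sqrt

/-- Let `f : ℝ^m → ℝ` be `C¹`, `α ∈ (0,1)`, `δ₀ > 0`, and
`h : ℝ^m → (0, δ₀]` continuous with `f(x − h(x)∇f(x)) − f(x) ≤ −α h(x)‖∇f(x)‖²` for all `x`.
For the sequence `x_{n+1} = x_n − h(x_n)∇f(x_n)` from any initial point: every cluster point
is a critical point of `f`, and either `f(x n) → −∞` or `‖x_{n+1} − x_n‖ → 0`. -/
theorem continuous_backtracking_GD_properties
    {m : ℕ} (f : EuclideanSpace ℝ (Fin m) → ℝ) (hf : ContDiff ℝ 1 f)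
    (α δ₀ : ℝ) (hα0 : 0 < α) (hα1 : α < 1) (hδ₀ : 0 < δ₀)
    (h : EuclideanSpace ℝ (Fin m) → ℝ) (hcont : Continuous h)
    (hpos : ∀ x, 0 < h x) (hle : ∀ x, h x ≤ δ₀)
    (harmijo : ∀ x, f (x - h x • ∇ f x) - f x ≤ -(α * h x * ‖∇ f x‖ ^ 2))
    (x : ℕ → EuclideanSpace ℝ (Fin m))
    (hupd : ∀ n, x (n + 1) = x n - h (x n) • ∇ f (x n)) :
    (∀ p, MapClusterPt p Filter.atTop x → ∇ f p = 0) ∧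
      (Filter.Tendsto (fun n => f (x n)) Filter.atTop Filter.atBot ∨
        Filter.Tendsto (fun n => ‖x (n + 1) - x n‖) Filter.atTop (nhds 0)) :=
  continuous_backtracking_GD_properties_general f hf α δ₀ hα0 h hcont hpos hle harmijo x hupd
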